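/- arXiv:math/0610587 — 5 statements merged into one kernel-verified Lean document; each statement's English description precedes it below -/
import Mathlib

section
/- Let k be a field of characteristic zero, ω ∈ k a primitive cube root of unity, and s ∈ k. Define the 2×2 matrices X = [[1,1],[0,ω]] and Y = [[1,0],[s,−1]]. Then X³ = I and Y² = I, and the pair (X,Y) generates the full matrix algebra M₂(k) (i.e., the corresponding 2-dimensional module of k⟨x,y⟩/(x³−1,y²−1) is simple) if and only if s ≠ 0 and s ≠ 2(ω−1). -/
open Matrix

/-- Stabilizer of the line spanned by `![1, t]` as a subalgebra of `M₂(k)`. -/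
def stabLine (k : Type*) [Field k] (t : k) : Subalgebra k (Matrix (Fin 2) (Fin 2) k) where
  carrier := {A | ∃ a : k, A.mulVec ![1, t] = a • ![1, t]}
  mul_mem' := by
    rintro A B ⟨a, ha⟩ ⟨b, hb⟩
    exact ⟨a * b, by rw [← Matrix.mulVec_mulVec, hb, Matrix.mulVec_smul, ha, smul_smul, mul_comm]⟩
  add_mem' := by
    rintro A B ⟨a, ha⟩ ⟨b, hb⟩
    exact ⟨a + b, by rw [Matrix.add_mulVec, ha, hb, add_smul]⟩
  algebraMap_mem' := fun r => ⟨r, by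
    funext i
    fin_cases i <;>
      simp [Matrix.algebraMap_eq_diagonal, Matrix.mulVec, dotProduct,
        Fin.sum_univ_succ, Matrix.diagonal]⟩

/-- For `ω` a primitive cube root of unity and `s ∈ k`, the matrices
`X = [[1,1],[0,ω]]`, `Y = [[1,0],[s,-1]]` satisfy `X³ = 1`, `Y² = 1`, and they
generate the full matrix algebra `M₂(k)` iff `s ≠ 0` and `s ≠ 2(ω-1)`. -/
theorem two_dim_simple_iff (k : Type*) [Field k] [CharZero k]
    (ω : k) (hω : IsPrimitiveRoot ω 3) (s : k) :
    (!![1, 1; 0, ω] : Matrix (Fin 2) (Fin 2) k) ^ 3 = 1 ∧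
    (!![1, 0; s, -1] : Matrix (Fin 2) (Fin 2) k) ^ 2 = 1 ∧
    (Algebra.adjoin k
        ({!![1, 1; 0, ω], !![1, 0; s, -1]} : Set (Matrix (Fin 2) (Fin 2) k)) = ⊤ ↔
      s ≠ 0 ∧ s ≠ 2 * (ω - 1)) := by
  have hω1 : ω ≠ 1 := hω.ne_one (by norm_num)
  have hω3 : ω ^ 3 = 1 := hω.pow_eq_one
  have hrel : ω ^ 2 + ω + 1 = 0 := by
    have h2 : (ω - 1) * (ω ^ 2 + ω + 1) = 0 := by linear_combination hω3
    rcases mul_eq_zero.mp h2 with h' | h'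
    · exact absurd (sub_eq_zero.mp h') hω1
    · exact h'
  have hω1' : 1 - ω ≠ 0 := fun h => hω1 (sub_eq_zero.mp h).symm
  refine ⟨?_, ?_, ?_⟩
  · ext i j
    fin_cases i <;> fin_cases j <;>
      simp [pow_succ, Matrix.mul_apply, Fin.sum_univ_succ, Matrix.one_apply] <;>
      first
        | linear_combination hrel
        | linear_combination (ω - 1) * hrel
  · ext i j
    fin_cases i <;> fin_cases j <;>
      simp [pow_succ, Matrix.mul_apply, Fin.sum_univ_succ, Matrix.one_apply]
  constructor
  · -- forward direction
    intro hadj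
    have habs : ∀ t : k, (!![1, 1; 0, ω] : Matrix (Fin 2) (Fin 2) k) ∈ stabLine k t → (!![1, 0; s, -1] : Matrix (Fin 2) (Fin 2) k) ∈ stabLine k t → False := by
      intro t h1 h2
      have hle : Algebra.adjoin k ({(!![1, 1; 0, ω] : Matrix (Fin 2) (Fin 2) k), (!![1, 0; s, -1] : Matrix (Fin 2) (Fin 2) k)} : Set (Matrix (Fin 2) (Fin 2) k)) ≤ stabLine k t := by
        apply Algebra.adjoin_le
        intro A hA
        rcases hA with rfl | hA
        · exact h1
        · rcases hA with rfl
          exact h2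
      rw [hadj] at hle
      obtain ⟨a, ha⟩ : (!![0, 0; 1, 0] : Matrix (Fin 2) (Fin 2) k) ∈ stabLine k t :=
        hle Algebra.mem_top
      have h0 := congrFun ha 0
      have h1' := congrFun ha 1
      simp [Matrix.mulVec, dotProduct, Fin.sum_univ_succ] at h0 h1'
      rw [← h0] at h1'
      simp at h1'
    constructor
    · intro hs0
      apply habs 0
      · exact ⟨1, by funext i; fin_cases i <;>
          simp [Matrix.mulVec, dotProduct, Fin.sum_univ_succ]⟩
      · exact ⟨1, by funext i; fin_cases i <;>
          simp [Matrix.mulVec, dotProduct, Fin.sum_univ_succ, hs0]⟩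
    · intro hs2
      apply habs (ω - 1)
      · exact ⟨ω, by funext i; fin_cases i <;>
          (simp [Matrix.mulVec, dotProduct, Fin.sum_univ_succ]; try ring)⟩
      · exact ⟨1, by funext i; fin_cases i <;>
          (simp [Matrix.mulVec, dotProduct, Fin.sum_univ_succ, hs2]; try ring)⟩
  · -- backward direction
    rintro ⟨hs0, hs2⟩
    have hc : s - 2 * (ω - 1) ≠ 0 := sub_ne_zero.mpr hs2
    let S := Algebra.adjoin k ({(!![1, 1; 0, ω] : Matrix (Fin 2) (Fin 2) k), (!![1, 0; s, -1] : Matrix (Fin 2) (Fin 2) k)} : Set (Matrix (Fin 2) (Fin 2) k))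
    show S = ⊤
    have hX : (!![1, 1; 0, ω] : Matrix (Fin 2) (Fin 2) k) ∈ S := Algebra.subset_adjoin (Set.mem_insert _ _)
    have hY : (!![1, 0; s, -1] : Matrix (Fin 2) (Fin 2) k) ∈ S := Algebra.subset_adjoin (Set.mem_insert_of_mem _ rfl)
    -- E12
    have key1 : ((!![1, 1; 0, ω] : Matrix (Fin 2) (Fin 2) k) - ω • 1) * (!![1, 0; s, -1] : Matrix (Fin 2) (Fin 2) k) * ((!![1, 1; 0, ω] : Matrix (Fin 2) (Fin 2) k) - 1) = (s - 2 * (ω - 1)) • !![0, 1; 0, 0] := by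
      ext i j
      fin_cases i <;> fin_cases j <;>
        simp [Matrix.mul_apply, Fin.sum_univ_succ, Matrix.one_fin_two] <;> ring
    have hE12 : (!![0, 1; 0, 0] : Matrix (Fin 2) (Fin 2) k) ∈ S := by
      have heq : (!![0, 1; 0, 0] : Matrix (Fin 2) (Fin 2) k) =
          (s - 2 * (ω - 1))⁻¹ • (((!![1, 1; 0, ω] : Matrix (Fin 2) (Fin 2) k) - ω • 1) * (!![1, 0; s, -1] : Matrix (Fin 2) (Fin 2) k) * ((!![1, 1; 0, ω] : Matrix (Fin 2) (Fin 2) k) - 1)) := by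
        rw [key1, smul_smul, inv_mul_cancel₀ hc, one_smul]
      rw [heq]
      exact S.smul_mem (S.mul_mem (S.mul_mem (S.sub_mem hX (S.smul_mem S.one_mem ω)) hY)
        (S.sub_mem hX S.one_mem)) _
    -- P
    have key2 : ((!![1, 1; 0, ω] : Matrix (Fin 2) (Fin 2) k) - 1) * (!![1, 0; s, -1] : Matrix (Fin 2) (Fin 2) k) * ((!![1, 1; 0, ω] : Matrix (Fin 2) (Fin 2) k) - ω • 1) =
        s • !![1 - ω, 1; -(1 - ω) ^ 2, ω - 1] := by
      ext i j
      fin_cases i <;> fin_cases j <;>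
        simp [Matrix.mul_apply, Fin.sum_univ_succ, Matrix.one_fin_two] <;> ring_nf <;>
        linear_combination s * hrel
    have hP : (!![1 - ω, 1; -(1 - ω) ^ 2, ω - 1] : Matrix (Fin 2) (Fin 2) k) ∈ S := by
      have heq : (!![1 - ω, 1; -(1 - ω) ^ 2, ω - 1] : Matrix (Fin 2) (Fin 2) k) =
          s⁻¹ • (((!![1, 1; 0, ω] : Matrix (Fin 2) (Fin 2) k) - 1) * (!![1, 0; s, -1] : Matrix (Fin 2) (Fin 2) k) * ((!![1, 1; 0, ω] : Matrix (Fin 2) (Fin 2) k) - ω • 1)) := by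
        rw [key2, smul_smul, inv_mul_cancel₀ hs0, one_smul]
      rw [heq]
      exact S.smul_mem (S.mul_mem (S.mul_mem (S.sub_mem hX S.one_mem) hY)
        (S.sub_mem hX (S.smul_mem S.one_mem ω))) _
    have hd : -(1 - ω) ^ 2 ≠ 0 := by
      simpa using pow_ne_zero 2 hω1'
    -- E11
    have key3 : (!![0, 1; 0, 0] : Matrix (Fin 2) (Fin 2) k) * !![1 - ω, 1; -(1 - ω) ^ 2, ω - 1]
        - (ω - 1) • !![0, 1; 0, 0] = (-(1 - ω) ^ 2) • !![1, 0; 0, 0] := by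
      ext i j
      fin_cases i <;> fin_cases j <;>
        simp [Matrix.mul_apply, Fin.sum_univ_succ] <;> ring
    have hE11 : (!![1, 0; 0, 0] : Matrix (Fin 2) (Fin 2) k) ∈ S := by
      have heq : (!![1, 0; 0, 0] : Matrix (Fin 2) (Fin 2) k) =
          (-(1 - ω) ^ 2)⁻¹ • (!![0, 1; 0, 0] * !![1 - ω, 1; -(1 - ω) ^ 2, ω - 1]
            - (ω - 1) • !![0, 1; 0, 0]) := by
        rw [key3, smul_smul, inv_mul_cancel₀ hd, one_smul]
      rw [heq]
      exact S.smul_mem (S.sub_mem (S.mul_mem hE12 hP) (S.smul_mem hE12 _)) _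
    -- E22
    have hE22 : (!![0, 0; 0, 1] : Matrix (Fin 2) (Fin 2) k) ∈ S := by
      have heq : (!![0, 0; 0, 1] : Matrix (Fin 2) (Fin 2) k) = 1 - !![1, 0; 0, 0] := by
        ext i j
        fin_cases i <;> fin_cases j <;> simp [Matrix.one_apply]
      rw [heq]
      exact S.sub_mem S.one_mem hE11
    -- E21
    have key4 : (!![0, 0; 0, 1] : Matrix (Fin 2) (Fin 2) k) * !![1 - ω, 1; -(1 - ω) ^ 2, ω - 1]
        * !![1, 0; 0, 0] = (-(1 - ω) ^ 2) • !![0, 0; 1, 0] := by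
      ext i j
      fin_cases i <;> fin_cases j <;>
        simp [Matrix.mul_apply, Fin.sum_univ_succ] <;> ring
    have hE21 : (!![0, 0; 1, 0] : Matrix (Fin 2) (Fin 2) k) ∈ S := by
      have heq : (!![0, 0; 1, 0] : Matrix (Fin 2) (Fin 2) k) =
          (-(1 - ω) ^ 2)⁻¹ • (!![0, 0; 0, 1] * !![1 - ω, 1; -(1 - ω) ^ 2, ω - 1]
            * !![1, 0; 0, 0]) := by
        rw [key4, smul_smul, inv_mul_cancel₀ hd, one_smul]
      rw [heq]
      exact S.smul_mem (S.mul_mem (S.mul_mem hE22 hP) hE11) _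
    rw [eq_top_iff]
    intro A _
    have hA : A = A 0 0 • !![1, 0; 0, 0] + A 0 1 • !![0, 1; 0, 0]
        + A 1 0 • !![0, 0; 1, 0] + A 1 1 • !![0, 0; 0, 1] := by
      ext i j
      fin_cases i <;> fin_cases j <;> simp
    rw [hA]
    exact S.add_mem (S.add_mem (S.add_mem (S.smul_mem hE11 _) (S.smul_mem hE12 _))
      (S.smul_mem hE21 _)) (S.smul_mem hE22 _)
end

section
/- Define d(n) for n ≥ 1 by d(6m+s) = 6m² + 2sm + s − 1 for s ∈ {1,…,5} and d(6m) = 6m² + 1 for m ≥ 1. Then the formal power series Σ_{n≥1} d(n) tⁿ equals (t² + 2t⁶ − 2t⁷ + t⁸)/((1−t)²(1−t⁶)). -/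
open PowerSeries

/-- The maximal dimension of a component of `Simp_n(A)`:
`d(6m+s) = 6m² + 2sm + s - 1` for `s = 1,…,5` and `d(6m) = 6m² + 1` for `m ≥ 1`
(with `d(0) = 0` by convention). -/
def maxSimpDim (n : ℕ) : ℤ :=
  if n = 0 then 0
  else if n % 6 = 0 then 6 * ((n / 6 : ℕ) : ℤ) ^ 2 + 1
  else 6 * ((n / 6 : ℕ) : ℤ) ^ 2 + 2 * ((n % 6 : ℕ) : ℤ) * ((n / 6 : ℕ) : ℤ)
    + ((n % 6 : ℕ) : ℤ) - 1

lemma maxSimpDim_eq (m s : ℕ) (hs : s < 6) (h : 0 < 6*m + s) :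
    maxSimpDim (6*m+s) =
      if s = 0 then 6*(m:ℤ)^2+1 else 6*(m:ℤ)^2+2*(s:ℤ)*m+s-1 := by
  have h1 : (6*m+s) % 6 = s := by omega
  have h2 : (6*m+s) / 6 = m := by omega
  have h3 : ¬ (6*m+s = 0) := by omega
  simp only [maxSimpDim, h1, h2, if_neg h3]

lemma rec9 (n : ℕ) :
    maxSimpDim (n+9) - 2*maxSimpDim (n+8) + maxSimpDim (n+7)
      - maxSimpDim (n+3) + 2*maxSimpDim (n+2) - maxSimpDim (n+1) = 0 := by
  obtain ⟨m, r, hr, hn⟩ : ∃ m r, r < 6 ∧ n = 6*m + r :=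
    ⟨n/6, n%6, Nat.mod_lt _ (by norm_num), by omega⟩
  interval_cases r
  · have e9 : n + 9 = 6*(m+1)+3 := by omega
    have e8 : n + 8 = 6*(m+1)+2 := by omega
    have e7 : n + 7 = 6*(m+1)+1 := by omega
    have e3 : n + 3 = 6*(m+0)+3 := by omega
    have e2 : n + 2 = 6*(m+0)+2 := by omega
    have e1 : n + 1 = 6*(m+0)+1 := by omega
    rw [e9, maxSimpDim_eq _ _ (by omega) (by omega)]
    rw [e8, maxSimpDim_eq _ _ (by omega) (by omega)]
    rw [e7, maxSimpDim_eq _ _ (by omega) (by omega)]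
    rw [e3, maxSimpDim_eq _ _ (by omega) (by omega)]
    rw [e2, maxSimpDim_eq _ _ (by omega) (by omega)]
    rw [e1, maxSimpDim_eq _ _ (by omega) (by omega)]
    norm_num
    ring
  · have e9 : n + 9 = 6*(m+1)+4 := by omega
    have e8 : n + 8 = 6*(m+1)+3 := by omega
    have e7 : n + 7 = 6*(m+1)+2 := by omega
    have e3 : n + 3 = 6*(m+0)+4 := by omega
    have e2 : n + 2 = 6*(m+0)+3 := by omega
    have e1 : n + 1 = 6*(m+0)+2 := by omega
    rw [e9, maxSimpDim_eq _ _ (by omega) (by omega)]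
    rw [e8, maxSimpDim_eq _ _ (by omega) (by omega)]
    rw [e7, maxSimpDim_eq _ _ (by omega) (by omega)]
    rw [e3, maxSimpDim_eq _ _ (by omega) (by omega)]
    rw [e2, maxSimpDim_eq _ _ (by omega) (by omega)]
    rw [e1, maxSimpDim_eq _ _ (by omega) (by omega)]
    norm_num
    ring
  · have e9 : n + 9 = 6*(m+1)+5 := by omega
    have e8 : n + 8 = 6*(m+1)+4 := by omega
    have e7 : n + 7 = 6*(m+1)+3 := by omega
    have e3 : n + 3 = 6*(m+0)+5 := by omega
    have e2 : n + 2 = 6*(m+0)+4 := by omega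
    have e1 : n + 1 = 6*(m+0)+3 := by omega
    rw [e9, maxSimpDim_eq _ _ (by omega) (by omega)]
    rw [e8, maxSimpDim_eq _ _ (by omega) (by omega)]
    rw [e7, maxSimpDim_eq _ _ (by omega) (by omega)]
    rw [e3, maxSimpDim_eq _ _ (by omega) (by omega)]
    rw [e2, maxSimpDim_eq _ _ (by omega) (by omega)]
    rw [e1, maxSimpDim_eq _ _ (by omega) (by omega)]
    norm_num
    ring
  · have e9 : n + 9 = 6*(m+2)+0 := by omega
    have e8 : n + 8 = 6*(m+1)+5 := by omega
    have e7 : n + 7 = 6*(m+1)+4 := by omega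
    have e3 : n + 3 = 6*(m+1)+0 := by omega
    have e2 : n + 2 = 6*(m+0)+5 := by omega
    have e1 : n + 1 = 6*(m+0)+4 := by omega
    rw [e9, maxSimpDim_eq _ _ (by omega) (by omega)]
    rw [e8, maxSimpDim_eq _ _ (by omega) (by omega)]
    rw [e7, maxSimpDim_eq _ _ (by omega) (by omega)]
    rw [e3, maxSimpDim_eq _ _ (by omega) (by omega)]
    rw [e2, maxSimpDim_eq _ _ (by omega) (by omega)]
    rw [e1, maxSimpDim_eq _ _ (by omega) (by omega)]
    norm_num
    ring
  · have e9 : n + 9 = 6*(m+2)+1 := by omega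
    have e8 : n + 8 = 6*(m+2)+0 := by omega
    have e7 : n + 7 = 6*(m+1)+5 := by omega
    have e3 : n + 3 = 6*(m+1)+1 := by omega
    have e2 : n + 2 = 6*(m+1)+0 := by omega
    have e1 : n + 1 = 6*(m+0)+5 := by omega
    rw [e9, maxSimpDim_eq _ _ (by omega) (by omega)]
    rw [e8, maxSimpDim_eq _ _ (by omega) (by omega)]
    rw [e7, maxSimpDim_eq _ _ (by omega) (by omega)]
    rw [e3, maxSimpDim_eq _ _ (by omega) (by omega)]
    rw [e2, maxSimpDim_eq _ _ (by omega) (by omega)]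
    rw [e1, maxSimpDim_eq _ _ (by omega) (by omega)]
    norm_num
    ring
  · have e9 : n + 9 = 6*(m+2)+2 := by omega
    have e8 : n + 8 = 6*(m+2)+1 := by omega
    have e7 : n + 7 = 6*(m+2)+0 := by omega
    have e3 : n + 3 = 6*(m+1)+2 := by omega
    have e2 : n + 2 = 6*(m+1)+1 := by omega
    have e1 : n + 1 = 6*(m+1)+0 := by omega
    rw [e9, maxSimpDim_eq _ _ (by omega) (by omega)]
    rw [e8, maxSimpDim_eq _ _ (by omega) (by omega)]
    rw [e7, maxSimpDim_eq _ _ (by omega) (by omega)]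
    rw [e3, maxSimpDim_eq _ _ (by omega) (by omega)]
    rw [e2, maxSimpDim_eq _ _ (by omega) (by omega)]
    rw [e1, maxSimpDim_eq _ _ (by omega) (by omega)]
    norm_num
    ring

/-- The generating function of the sequence of maximal dimensions:
`Σ_{n≥1} d(n) tⁿ = (t² + 2t⁶ - 2t⁷ + t⁸)/((1-t)²(1-t⁶))`. -/
theorem maxSimpDim_generating_function :
    (PowerSeries.mk fun n => (maxSimpDim n : ℚ)) * ((1 - X) ^ 2 * (1 - X ^ 6)) =
      X ^ 2 + 2 * X ^ 6 - 2 * X ^ 7 + X ^ 8 := by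
  set f : ℚ⟦X⟧ := PowerSeries.mk fun n => (maxSimpDim n : ℚ) with hf
  have key : f * ((1 - X) ^ 2 * (1 - X ^ 6)) =
      f - (f*X^1 + f*X^1) + f*X^2 - f*X^6 + (f*X^7 + f*X^7) - f*X^8 := by ring
  have hrhs : (X ^ 2 + 2 * X ^ 6 - 2 * X ^ 7 + X ^ 8 : ℚ⟦X⟧) =
      X^2 + (X^6 + X^6) - (X^7 + X^7) + X^8 := by ring
  rw [key, hrhs]
  ext n
  simp only [map_add, map_sub, coeff_mul_X_pow', coeff_mk, coeff_X_pow, map_pow,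
    map_mul, map_one, map_ofNat]
  rcases lt_or_ge n 9 with h | h
  · interval_cases n <;> norm_num [hf, maxSimpDim, ← coeff_zero_eq_constantCoeff]
  · obtain ⟨j, rfl⟩ : ∃ j, n = j + 9 := ⟨n - 9, by omega⟩
    have h1 : j + 9 - 1 = j + 8 := by omega
    have h2 : j + 9 - 2 = j + 7 := by omega
    have h6 : j + 9 - 6 = j + 3 := by omega
    have h7 : j + 9 - 7 = j + 2 := by omega
    have h8 : j + 9 - 8 = j + 1 := by omega
    rw [if_pos (by omega : 1 ≤ j+9), if_pos (by omega : 2 ≤ j+9),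
      if_pos (by omega : 6 ≤ j+9), if_pos (by omega : 7 ≤ j+9),
      if_pos (by omega : 8 ≤ j+9), h1, h2, h6, h7, h8,
      if_neg (by omega : ¬ j+9 = 2)]
    simp only [if_neg (show ¬ j+9 = 6 by omega), if_neg (show ¬ j+9 = 7 by omega),
      if_neg (show ¬ j+9 = 8 by omega), coeff_mk]
    simp only [hf, coeff_mk]
    have := rec9 j
    have : ((maxSimpDim (j+9) - 2*maxSimpDim (j+8) + maxSimpDim (j+7)
      - maxSimpDim (j+3) + 2*maxSimpDim (j+2) - maxSimpDim (j+1) : ℤ) : ℚ) = 0 := by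
      rw [this]; norm_num
    push_cast at this
    linarith
end

section
/- Let α = (α₁,α₂,α₃;α₁′,α₂′) be non-negative integers with α₁+α₂+α₃ = α₁′+α₂′ = n and αᵢ + αⱼ′ ≤ n for all i ∈ {1,2,3}, j ∈ {1,2}. Set m = α₁′. Then the number N of triples (a₁,a₂,a₃) of non-negative integers with aᵢ ≤ αᵢ for each i and a₁+a₂+a₃ = m equals (n + d + 1)/2, where d = 1 + n² − Σᵢαᵢ² − Σⱼ(αⱼ′)². -/
/-!
The hypotheses say exactly that `αᵢ ≤ m ≤ αⱼ + αₖ` for `m = α₁'`. Then no two of the upper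
bounds `aᵢ ≤ αᵢ` can fail at once, so by inclusion–exclusion
`N = C(m+2, 2) - ∑ᵢ C(m - αᵢ + 1, 2)`, and the claim is a polynomial identity after substituting
`n = α₁ + α₂ + α₃` and `α₂' = n - m`. The count is obtained by fixing `a₁`: the admissible `a₂`
form an interval whose length is `α₂ + 1` minus two truncated linear corrections, and summing
these corrections over `a₁` gives two triangular numbers.
-/

open Finset

theorem card_filter_fst_add_snd_eq (p q k : ℕ) :
    #{t ∈ range (p + 1) ×ˢ range (q + 1) | t.1 + t.2 = k} = min p k + 1 - (k - q) := by
  rw [← Nat.card_Icc (k - q) (min p k)]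
  refine card_nbij' Prod.fst (fun y => (y, k - y)) ?_ ?_ ?_ ?_ <;> intro t ht <;>
    simp only [coe_filter, coe_Icc, Set.mem_ofPred_eq, Set.mem_Icc, mem_product, mem_range,
      Prod.ext_iff, true_and] at ht ⊢ <;>
    omega

theorem card_filter_add_add_eq_sum (a b c m : ℕ) (ham : a ≤ m) :
    #{t ∈ range (a + 1) ×ˢ range (b + 1) ×ˢ range (c + 1) | t.1 + t.2.1 + t.2.2 = m} =
      ∑ x ∈ range (a + 1), #{t ∈ range (b + 1) ×ˢ range (c + 1) | t.1 + t.2 = m - x} := by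
  rw [card_filter, sum_product]
  refine sum_congr rfl fun x hx => ?_
  have hxm : x ≤ m := by have := mem_range.1 hx; omega
  rw [card_filter]
  refine sum_congr rfl fun t _ => if_congr ?_ rfl rfl
  dsimp only
  omega

theorem two_mul_sum_range_tsub (a d : ℕ) (hd : d ≤ a) :
    2 * ∑ x ∈ range (a + 1), (d - x) = d * (d + 1) := by
  have htail : ∑ x ∈ range (d + 1), (d - x) = ∑ x ∈ range (a + 1), (d - x) :=
    sum_subset (range_subset_range.2 (by omega)) fun x _ hx => by
      rw [mem_range] at hx; omega
  have hreflect : ∑ x ∈ range (d + 1), (d - x) = ∑ x ∈ range (d + 1), x := by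
    simpa using sum_range_reflect id (d + 1)
  rw [← htail, hreflect, mul_comm, sum_range_id_mul_two, add_tsub_cancel_right, mul_comm]

theorem two_mul_sum_range_tsub_const (a d : ℕ) (hd : d ≤ a) :
    2 * ∑ x ∈ range (a + 1), (x - d) = (a - d) * (a - d + 1) := by
  rw [← two_mul_sum_range_tsub a (a - d) (by omega), ← sum_range_reflect]
  congr 1
  refine sum_congr rfl fun x hx => ?_
  rw [mem_range] at hx
  omega

theorem two_mul_card_filter_add_add_eq (a b c m : ℕ) (ha : a ≤ m) (hb : b ≤ m) (hc : c ≤ m)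
    (hab : m ≤ a + b) (hac : m ≤ a + c) (hbc : m ≤ b + c) :
    2 * (#{t ∈ range (a + 1) ×ˢ range (b + 1) ×ˢ range (c + 1) |
        t.1 + t.2.1 + t.2.2 = m} : ℤ) =
      (m + 1) * (m + 2) - (m - a) * (m - a + 1) - (m - b) * (m - b + 1)
        - (m - c) * (m - c + 1) := by
  have hsum : #{t ∈ range (a + 1) ×ˢ range (b + 1) ×ˢ range (c + 1) | t.1 + t.2.1 + t.2.2 = m}
      + ∑ x ∈ range (a + 1), (x - (m - b)) + ∑ x ∈ range (a + 1), (m - c - x)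
        = (a + 1) * (b + 1) := by
    rw [card_filter_add_add_eq_sum a b c m ha, ← sum_add_distrib, ← sum_add_distrib]
    calc _ = ∑ x ∈ range (a + 1), (b + 1) := sum_congr rfl fun x hx => by
            rw [card_filter_fst_add_snd_eq, mem_range] at *; omega
      _ = (a + 1) * (b + 1) := by rw [sum_const, card_range, smul_eq_mul]
  have hS₁ := two_mul_sum_range_tsub_const a (m - b) (by omega)
  have hS₂ := two_mul_sum_range_tsub a (m - c) (by omega)
  have hmb : m - b ≤ a := by omega
  generalize #{t ∈ range (a + 1) ×ˢ range (b + 1) ×ˢ range (c + 1) |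
    t.1 + t.2.1 + t.2.2 = m} = N at hsum ⊢
  zify [hb, hc, hmb] at hsum hS₁ hS₂
  linear_combination 2 * hsum - hS₁ - hS₂

/-- Counting maximally iterated extensions: for a dimension vector
`α = (α₁,α₂,α₃;α₁',α₂')` with `α₁+α₂+α₃ = α₁'+α₂' = n` and `αᵢ + αⱼ' ≤ n`,
the number `N` of triples `(a₁,a₂,a₃)` with `aᵢ ≤ αᵢ` and `a₁+a₂+a₃ = α₁'`
satisfies `N = (n + d + 1)/2`, where `d = 1 + n² - Σαᵢ² - Σ(αⱼ')²`. -/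
theorem count_maximally_iterated_extensions (n : ℕ) (a1 a2 a3 b1 b2 : ℕ)
    (ha : a1 + a2 + a3 = n) (hb : b1 + b2 = n)
    (hij : ∀ a ∈ ({a1, a2, a3} : Set ℕ), ∀ b ∈ ({b1, b2} : Set ℕ), a + b ≤ n) :
    (2 : ℤ) * ((Finset.range (a1 + 1) ×ˢ Finset.range (a2 + 1) ×ˢ
        Finset.range (a3 + 1)).filter
          (fun t => t.1 + t.2.1 + t.2.2 = b1)).card =
      (n : ℤ) + (1 + (n : ℤ) ^ 2 - ((a1 : ℤ) ^ 2 + (a2 : ℤ) ^ 2 + (a3 : ℤ) ^ 2)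
        - ((b1 : ℤ) ^ 2 + (b2 : ℤ) ^ 2)) + 1 := by
  have h11 := hij a1 (by simp) b1 (by simp)
  have h12 := hij a1 (by simp) b2 (by simp)
  have h21 := hij a2 (by simp) b1 (by simp)
  have h22 := hij a2 (by simp) b2 (by simp)
  have h31 := hij a3 (by simp) b1 (by simp)
  have h32 := hij a3 (by simp) b2 (by simp)
  have hcount := two_mul_card_filter_add_add_eq a1 a2 a3 b1
    (by omega) (by omega) (by omega) (by omega) (by omega) (by omega)
  have hb2 : (b2 : ℤ) = n - b1 := by omega
  subst ha
  rw [hcount, hb2]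
  push_cast
  ring
end

section
/- Let k be a field of characteristic zero and fix signs ε₁,…,ε_n ∈ {1,−1} with p indices equal to +1 and q = n − p indices equal to −1. Then the set of upper triangular n×n matrices Y with Y² = I and diagonal (ε₁,…,ε_n) is in bijection with k^{pq}: each such Y is uniquely determined by the free choice of entries y_{ik} (i < k) with ε_i ≠ ε_k, the remaining entries being determined by Y² = I. In particular this set is an affine space of dimension pq = (n² − p² − q²)/2. -/
section Aux
variable {k : Type*} [Field k] {n : ℕ}

open Classical in
/-- Construct the matrix entries from the free data `f`. -/
private noncomputable def buildY (ε : Fin n → k) (f : Fin n → Fin n → k) (i j : Fin n) : k :=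
  if i = j then ε i
  else if hij : i < j then
    if ε i = ε j then
      -(ε i / 2) * ∑ m ∈ (Finset.Ioo i j).attach,
        buildY ε f i m.1 * buildY ε f m.1 j
    else f i j
  else 0
termination_by ((j : ℕ) - i)
decreasing_by
  all_goals
    obtain ⟨h1, h2⟩ := Finset.mem_Ioo.mp m.2
    simp only [Fin.lt_def] at *
    omega

open Classical in
private lemma buildY_diag (ε : Fin n → k) (f : Fin n → Fin n → k) (i : Fin n) :
    buildY ε f i i = ε i := by rw [buildY.eq_def]; simp

open Classical in
private lemma buildY_lower (ε : Fin n → k) (f : Fin n → Fin n → k) {i j : Fin n}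
    (h : j < i) : buildY ε f i j = 0 := by
  rw [buildY.eq_def]; rw [if_neg (by exact fun e => absurd e.symm (ne_of_lt h)),
    dif_neg (by exact fun e => absurd (lt_trans h e) (lt_irrefl _))]

open Classical in
private lemma buildY_free (ε : Fin n → k) (f : Fin n → Fin n → k) {i j : Fin n}
    (hij : i < j) (hne : ε i ≠ ε j) : buildY ε f i j = f i j := by
  rw [buildY.eq_def, if_neg (ne_of_lt hij), dif_pos hij, if_neg hne]

open Classical in
private lemma buildY_rec (ε : Fin n → k) (f : Fin n → Fin n → k) {i j : Fin n}
    (hij : i < j) (heq : ε i = ε j) :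
    buildY ε f i j
      = -(ε i / 2) * ∑ m ∈ Finset.Ioo i j, buildY ε f i m * buildY ε f m j := by
  rw [buildY.eq_def, if_neg (ne_of_lt hij), dif_pos hij, if_pos heq,
    Finset.sum_attach (Finset.Ioo i j) (fun m => buildY ε f i m * buildY ε f m j)]

/-- key sum formula for products of upper triangular matrices with diagonal ε. -/
private lemma mul_apply_of_lt (ε : Fin n → k) (Y Z : Matrix (Fin n) (Fin n) k)
    (htriY : ∀ i j, j < i → Y i j = 0) (htriZ : ∀ i j, j < i → Z i j = 0)
    (hdY : ∀ i, Y i i = ε i) (hdZ : ∀ i, Z i i = ε i)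
    {i j : Fin n} (hij : i < j) :
    (Y * Z) i j = ε i * Z i j + Y i j * ε j + ∑ m ∈ Finset.Ioo i j, Y i m * Z m j := by
  rw [Matrix.mul_apply]
  rw [← Finset.sum_subset (Finset.subset_univ (Finset.Icc i j))
    (fun x _ hx => by
      have hx' : ¬(i ≤ x ∧ x ≤ j) := by simpa [Finset.mem_Icc] using hx
      rcases not_and_or.mp hx' with h | h
      · rw [htriY i x (lt_of_not_ge h), zero_mul]
      · rw [htriZ x j (lt_of_not_ge h), mul_zero])]
  rw [Finset.Icc_eq_cons_Ioc hij.le, Finset.sum_cons,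
    Finset.Ioc_eq_cons_Ioo hij, Finset.sum_cons, hdY i, hdZ j]
  ring

open Classical in
/-- `buildY` squares to the identity. -/
private lemma buildY_sq (ε : Fin n → k) (hε : ∀ i, ε i = 1 ∨ ε i = -1)
    [CharZero k] (f : Fin n → Fin n → k) :
    (Matrix.of (buildY ε f)) * (Matrix.of (buildY ε f)) = 1 := by
  set Y : Matrix (Fin n) (Fin n) k := Matrix.of (buildY ε f) with hY
  have htri : ∀ i j, j < i → Y i j = 0 := fun i j h => buildY_lower ε f h
  have hdiag : ∀ i, Y i i = ε i := fun i => buildY_diag ε f i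
  have hsq : ∀ i, ε i * ε i = 1 := by
    intro i; rcases hε i with h | h <;> rw [h] <;> ring
  set E : Matrix (Fin n) (Fin n) k := Y * Y - 1 with hE
  -- E vanishes on and below the diagonal
  have hElow : ∀ i j : Fin n, j ≤ i → E i j = 0 := by
    intro i j h
    rcases eq_or_lt_of_le h with rfl | h
    · have : (Y * Y) j j = 1 := by
        rw [Matrix.mul_apply]
        rw [Finset.sum_eq_single j
          (fun m _ hm => by
            rcases lt_or_gt_of_ne hm with h' | h'
            · rw [htri j m h', zero_mul]
            · rw [htri m j h', mul_zero])
          (fun h => absurd (Finset.mem_univ j) h)]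
        rw [hdiag j]; exact hsq j
      simp [hE, this]
    · have : (Y * Y) i j = 0 := by
        rw [Matrix.mul_apply]
        refine Finset.sum_eq_zero (fun m _ => ?_)
        rcases lt_or_ge m i with h' | h'
        · rw [htri i m h', zero_mul]
        · rw [htri m j (lt_of_lt_of_le h h'), mul_zero]
      simp [hE, this, Matrix.one_apply_ne (ne_of_gt h)]
  -- E vanishes at positions with equal signs
  have hEeq : ∀ i j : Fin n, i < j → ε i = ε j → E i j = 0 := by
    intro i j hij hs
    have h1 : (Y * Y) i j = ε i * Y i j + Y i j * ε j
        + ∑ m ∈ Finset.Ioo i j, Y i m * Y m j :=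
      mul_apply_of_lt ε Y Y htri htri hdiag hdiag hij
    have h2 : Y i j = -(ε i / 2) * ∑ m ∈ Finset.Ioo i j, Y i m * Y m j :=
      buildY_rec ε f hij hs
    have : (Y * Y) i j = 0 := by
      rw [h1, h2, ← hs]
      set S := ∑ m ∈ Finset.Ioo i j, Y i m * Y m j with hS
      calc ε i * (-(ε i / 2) * S) + -(ε i / 2) * S * ε i + S
          = -(ε i * ε i) * S + S := by ring
        _ = 0 := by rw [hsq i]; ring
    simp [hE, this, Matrix.one_apply_ne (ne_of_lt hij)]
  -- E commutes with Y
  have hcomm : E * Y = Y * E := by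
    rw [hE]; noncomm_ring
  -- E vanishes everywhere, by strong induction on the gap
  have hEzero : ∀ d : ℕ, ∀ i j : Fin n, (j : ℕ) - (i : ℕ) = d → E i j = 0 := by
    intro d
    induction d using Nat.strong_induction_on with
    | _ d ih =>
      intro i j hd
      rcases le_or_gt j i with h | hij
      · exact hElow i j h
      by_cases hs : ε i = ε j
      · exact hEeq i j hij hs
      -- remaining case: compare (E*Y) i j with (Y*E) i j
      have hEsmall : ∀ m : Fin n, i < m → m < j → E i m = 0 ∧ E m j = 0 := by
        intro m h1 h2
        have hlt1 : (m : ℕ) - (i : ℕ) < d := by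
          have := Fin.lt_def.mp h1; have := Fin.lt_def.mp h2
          have := Fin.lt_def.mp hij; omega
        have hlt2 : (j : ℕ) - (m : ℕ) < d := by
          have := Fin.lt_def.mp h1; have := Fin.lt_def.mp h2
          have := Fin.lt_def.mp hij; omega
        exact ⟨ih _ hlt1 i m rfl, ih _ hlt2 m j rfl⟩
      have h1 : (E * Y) i j = E i j * ε j := by
        rw [Matrix.mul_apply]
        rw [Finset.sum_eq_single j
          (fun m _ hm => by
            rcases lt_or_gt_of_ne hm with h' | h'
            · rcases le_or_gt m i with h'' | h''
              · rw [hElow i m h'', zero_mul]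
              · rw [(hEsmall m h'' h').1, zero_mul]
            · rw [htri m j h', mul_zero])
          (fun h => absurd (Finset.mem_univ j) h), hdiag j]
      have h2 : (Y * E) i j = ε i * E i j := by
        rw [Matrix.mul_apply]
        rw [Finset.sum_eq_single i
          (fun m _ hm => by
            rcases lt_or_gt_of_ne hm with h' | h'
            · rw [htri i m h', zero_mul]
            · rcases le_or_gt j m with h'' | h''
              · rw [hElow m j h'', mul_zero]
              · rw [(hEsmall m h' h'').2, mul_zero])
          (fun h => absurd (Finset.mem_univ i) h), hdiag i]
      have h3 : E i j * ε j = ε i * E i j := by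
        rw [← h1, ← h2, hcomm]
      have h4 : E i j * (ε j - ε i) = 0 := by ring_nf; linear_combination h3
      rcases mul_eq_zero.mp h4 with h | h
      · exact h
      · exact absurd (by linear_combination -h) hs
  have : E = 0 := by
    ext i j; exact hEzero _ i j rfl
  have := sub_eq_zero.mp this
  simpa using this

/-- any matrix in the set satisfies the recursion at equal-sign positions. -/
private lemma mem_rec (ε : Fin n → k) (hε : ∀ i, ε i = 1 ∨ ε i = -1) [CharZero k]
    (Y : Matrix (Fin n) (Fin n) k) (htri : ∀ i j, j < i → Y i j = 0)
    (hsq : Y ^ 2 = 1) (hdiag : ∀ i, Y i i = ε i) {i j : Fin n} (hij : i < j)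
    (hs : ε i = ε j) :
    Y i j = -(ε i / 2) * ∑ m ∈ Finset.Ioo i j, Y i m * Y m j := by
  have h1 : (Y * Y) i j = ε i * Y i j + Y i j * ε j
      + ∑ m ∈ Finset.Ioo i j, Y i m * Y m j :=
    mul_apply_of_lt ε Y Y htri htri hdiag hdiag hij
  have h0 : (Y * Y) i j = 0 := by
    rw [← pow_two, hsq, Matrix.one_apply_ne (ne_of_lt hij)]
  have hsqε : ε i * ε i = 1 := by
    rcases hε i with h | h <;> rw [h] <;> ring
  have hne : ε i ≠ 0 := by
    rcases hε i with h | h <;> rw [h] <;> norm_num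
  rw [h0, ← hs] at h1
  set S := ∑ m ∈ Finset.Ioo i j, Y i m * Y m j with hS
  have hkey : 2 * ε i * Y i j = -S := by linear_combination -h1
  have h2' : (2 * ε i : k) ≠ 0 := mul_ne_zero two_ne_zero hne
  apply mul_left_cancel₀ h2'
  rw [hkey, show 2 * ε i * (-(ε i / 2) * S) = -(ε i * ε i) * S from by ring, hsqε]
  ring


open Classical in
/-- The free positions biject with pairs (plus index, minus index). -/
private noncomputable def posEquiv (ε : Fin n → k)
    (hε : ∀ i, ε i = 1 ∨ ε i = -1) (hone : (1 : k) ≠ -1) :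
    {x : Fin n × Fin n // x.1 < x.2 ∧ ε x.1 ≠ ε x.2}
      ≃ {i : Fin n // ε i = 1} × {i : Fin n // ε i = -1} where
  toFun x :=
    if h : ε x.1.1 = 1 then
      (⟨x.1.1, h⟩, ⟨x.1.2, by
        rcases hε x.1.2 with h2 | h2
        · exact absurd (h.trans h2.symm) x.2.2
        · exact h2⟩)
    else
      (⟨x.1.2, by
        rcases hε x.1.2 with h2 | h2
        · exact h2
        · rcases hε x.1.1 with h1 | h1
          · exact absurd h1 h
          · exact absurd (h1.trans h2.symm) x.2.2⟩,
       ⟨x.1.1, by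
        rcases hε x.1.1 with h1 | h1
        · exact absurd h1 h
        · exact h1⟩)
  invFun y :=
    if h : y.1.1 < y.2.1 then
      ⟨(y.1.1, y.2.1), h, by rw [y.1.2, y.2.2]; exact hone⟩
    else
      ⟨(y.2.1, y.1.1),
        lt_of_le_of_ne (not_lt.mp h)
          (fun e => hone (y.1.2 ▸ y.2.2 ▸ congrArg ε e).symm),
        by rw [y.1.2, y.2.2]; exact fun e => hone e.symm⟩
  left_inv := by
    rintro ⟨⟨i, j⟩, hij, hs⟩
    dsimp only
    by_cases h : ε i = 1
    · rw [dif_pos h]; dsimp only; rw [dif_pos (by exact hij)]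
    · rw [dif_neg h]; dsimp only; rw [dif_neg (by exact fun h2 => lt_asymm hij h2)]
  right_inv := by
    rintro ⟨⟨a, ha⟩, ⟨b, hb⟩⟩
    dsimp only
    by_cases h : a < b
    · rw [dif_pos h]; dsimp only; rw [dif_pos (by exact ha)]
    · rw [dif_neg h]; dsimp only; rw [dif_neg (by exact fun h2 => hone ((hb.symm.trans h2)).symm)]

end Aux

/-- Fix signs `ε₁,…,ε_n ∈ {1,-1}`, with `p` indices equal to `+1` and `q = n - p`
equal to `-1`. The set of upper triangular `n×n` matrices `Y` with `Y² = 1` and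
diagonal `ε` is in bijection with `k^{pq}`: the map sending such a matrix to its
entries at the free positions `(i,k)`, `i < k`, `ε i ≠ ε k`, is a bijection, and
the number of free positions is `p·q = (n² - p² - q²)/2`. -/
theorem upper_triangular_involutions_affine_space (k : Type*) [Field k]
    [CharZero k] (n : ℕ) (ε : Fin n → k) (hε : ∀ i, ε i = 1 ∨ ε i = -1)
    (p q : ℕ) (hp : Nat.card {i : Fin n // ε i = 1} = p)
    (hq : Nat.card {i : Fin n // ε i = -1} = q) :
    Function.Bijective
      (fun (Y : {Y : Matrix (Fin n) (Fin n) k //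
          (∀ i j : Fin n, j < i → Y i j = 0) ∧ Y ^ 2 = 1 ∧ ∀ i, Y i i = ε i}) =>
        fun (pos : {x : Fin n × Fin n // x.1 < x.2 ∧ ε x.1 ≠ ε x.2}) =>
          Y.1 pos.1.1 pos.1.2) ∧
    Nat.card {x : Fin n × Fin n // x.1 < x.2 ∧ ε x.1 ≠ ε x.2} = p * q ∧
    2 * (p * q) = n ^ 2 - p ^ 2 - q ^ 2 := by
  classical
  have hone : (1 : k) ≠ -1 := by norm_num
  refine ⟨⟨?_, ?_⟩, ?_, ?_⟩
  · -- injectivity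
    rintro ⟨Y, htriY, hsqY, hdY⟩ ⟨Z, htriZ, hsqZ, hdZ⟩ hfeq
    simp only at hfeq
    refine Subtype.ext ?_
    have key : ∀ d : ℕ, ∀ i j : Fin n, (j : ℕ) - (i : ℕ) = d → Y i j = Z i j := by
      intro d
      induction d using Nat.strong_induction_on with
      | _ d ih =>
        intro i j hd
        rcases lt_trichotomy i j with hij | rfl | hij
        · by_cases hs : ε i = ε j
          · rw [mem_rec ε hε Y htriY hsqY hdY hij hs,
              mem_rec ε hε Z htriZ hsqZ hdZ hij hs]
            congr 1
            refine Finset.sum_congr rfl (fun m hm => ?_)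
            obtain ⟨h1, h2⟩ := Finset.mem_Ioo.mp hm
            have hlt1 : (m : ℕ) - (i : ℕ) < d := by
              have := Fin.lt_def.mp h1; have := Fin.lt_def.mp h2
              have := Fin.lt_def.mp hij; omega
            have hlt2 : (j : ℕ) - (m : ℕ) < d := by
              have := Fin.lt_def.mp h1; have := Fin.lt_def.mp h2
              have := Fin.lt_def.mp hij; omega
            rw [ih _ hlt1 i m rfl, ih _ hlt2 m j rfl]
          · exact congrFun hfeq ⟨(i, j), hij, hs⟩
        · rw [hdY i, hdZ i]
        · rw [htriY i j hij, htriZ i j hij]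
    ext i j
    exact key _ i j rfl
  · -- surjectivity
    intro g
    set f : Fin n → Fin n → k :=
      fun i j => if h : i < j ∧ ε i ≠ ε j then g ⟨(i, j), h⟩ else 0 with hf
    refine ⟨⟨Matrix.of (buildY ε f), fun i j h => buildY_lower ε f h,
      by rw [pow_two]; exact buildY_sq ε hε f, fun i => buildY_diag ε f i⟩, ?_⟩
    funext pos
    obtain ⟨⟨i, j⟩, hij, hs⟩ := pos
    show buildY ε f i j = _
    rw [buildY_free ε f hij hs, hf]
    exact dif_pos ⟨hij, hs⟩
  · -- cardinality
    rw [Nat.card_congr (posEquiv ε hε hone), Nat.card_prod, hp, hq]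
  · -- arithmetic
    have hn : n = p + q := by
      have e1 : {i : Fin n // ε i = 1 ∨ ε i = -1} ≃ Fin n :=
        (Equiv.subtypeUnivEquiv hε)
      have e2 : {i : Fin n // ε i = 1 ∨ ε i = -1}
          ≃ {i : Fin n // ε i = 1} ⊕ {i : Fin n // ε i = -1} :=
        (subtypeOrEquiv _ _ (by
          rw [Pi.disjoint_iff]
          intro i
          rw [Prop.disjoint_iff]
          rintro ⟨h1, h2⟩
          exact hone (h1.symm.trans h2)))
      have := Nat.card_congr (e1.symm.trans e2)
      rw [Nat.card_sum, hp, hq, Nat.card_eq_fintype_card, Fintype.card_fin] at this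
      exact this
    have hsq : n ^ 2 = p ^ 2 + q ^ 2 + 2 * (p * q) := by
      subst hn; ring
    omega
end

section
/- Let k be an algebraically closed field of characteristic zero, ω a primitive cube root of unity, and λ₁, λ₂, λ₃ ∈ k nonzero with (λ₁λ₂λ₃)² = 1. Define X = PQ and Y = PQP, where P = [[λ₁, λ₁λ₃/λ₂ + λ₂, λ₂],[0, λ₂, λ₂],[0,0,λ₃]] and Q = [[λ₃,0,0],[−λ₂,λ₂,0],[λ₂, −λ₁λ₃/λ₂ − λ₂, λ₁]]. Then X³ = I and Y² = I. -/
open Matrix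

private lemma pow_three'' {M : Type*} [Monoid M] (a : M) : a ^ 3 = a * a * a := by
  rw [pow_succ, pow_succ, pow_one]

set_option maxHeartbeats 1000000 in
/-- With `P`, `Q` the explicit 3×3 matrices of the paper (parameters
`λ₁, λ₂, λ₃ ≠ 0` with `(λ₁λ₂λ₃)² = 1`), the matrices `X = PQ` and `Y = PQP`
satisfy `X³ = 1` and `Y² = 1`, defining a 3-dimensional representation of
`ℤ/3 * ℤ/2 ≅ PSL(2,ℤ)`. -/
theorem three_dim_representation (k : Type*) [Field k] [IsAlgClosed k]
    [CharZero k] (ω : k) (hω : IsPrimitiveRoot ω 3)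
    (l1 l2 l3 : k) (h1 : l1 ≠ 0) (h2 : l2 ≠ 0) (h3 : l3 ≠ 0)
    (hprod : (l1 * l2 * l3) ^ 2 = 1)
    (P Q : Matrix (Fin 3) (Fin 3) k)
    (hP : P = !![l1, l1 * l3 / l2 + l2, l2; 0, l2, l2; 0, 0, l3])
    (hQ : Q = !![l3, 0, 0; -l2, l2, 0; l2, -(l1 * l3 / l2) - l2, l1]) :
    (P * Q) ^ 3 = 1 ∧ (P * Q * P) ^ 2 = 1 := by
  have hX : P * Q = !![0, 0, l1 * l2;
      0, -(l1 * l3), l1 * l2;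
      l2 * l3, -(l2 * l3) - l1 * l3 ^ 2 / l2, l1 * l3] := by
    subst hP hQ
    ext i j
    fin_cases i <;> fin_cases j
    all_goals try simp [Matrix.mul_apply, Fin.sum_univ_succ, Matrix.vecHead,
      Matrix.vecTail]
    all_goals try ring1
    all_goals field_simp
    all_goals ring1
  have hY : P * Q * P = !![0, 0, l1 * l2 * l3;
      0, -(l1 * l2 * l3), 0;
      l1 * l2 * l3, 0, 0] := by
    rw [hX, hP]
    ext i j
    fin_cases i <;> fin_cases j
    all_goals try simp [Matrix.mul_apply, Fin.sum_univ_succ, Matrix.vecHead,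
      Matrix.vecTail]
    all_goals try ring1
    all_goals field_simp
    all_goals try ring1
    all_goals try exact Or.inl (by ring)
  refine ⟨?_, ?_⟩
  · rw [pow_three'', hX]
    ext i j
    fin_cases i <;> fin_cases j
    all_goals try simp [Matrix.mul_apply, Fin.sum_univ_succ, Matrix.vecHead,
      Matrix.vecTail, Matrix.one_apply]
    all_goals try ring1
    all_goals try field_simp
    all_goals try ring1
    all_goals try exact Or.inl (by ring)
    all_goals
      first
        | linear_combination hprod
        | linear_combination (l2 ^ 2 - 1 : k) * hprod
        | linear_combination (l2 ^ 3 - 1 : k) * hprod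
        | linear_combination (2 - l2 ^ 3 : k) * hprod
        | linear_combination (1 + l2 ^ 2 - l2 ^ 3 : k) * hprod
        | linear_combination (l2 ^ 2 : k) * hprod
        | linear_combination (l2 ^ 3 : k) * hprod
        | linear_combination (l2 ^ 4 : k) * hprod
  · rw [sq, hY]
    ext i j
    fin_cases i <;> fin_cases j
    all_goals try simp [Matrix.mul_apply, Fin.sum_univ_succ, Matrix.vecHead,
      Matrix.vecTail, Matrix.one_apply]
    all_goals try ring1
    all_goals linear_combination hprod
end
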